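/- Suppose Λ is countable, d ≥ 2, and there exists λ₀ ∈ Λ with P(λ₀|Q_k) > 0 for all k = 1,...,d. If moreover the model reproduces quantum predictions Σ_k Σ_λ P(k|M,λ) P(λ|Q_k) = 0 for the antidistinguishing measurement, then we reach a contradiction; i.e., no such model exists. -/
import Mathlib

/-- If some ontic state `λ₀` lies in the support of all `d` distributions
`P(·|Qₖ)`, then the quantum prediction `∑ₖ P(k|M,Qₖ) = 0` for the
antidistinguishing measurement cannot be reproduced: contradiction. -/
theorem stmt4 {Λ : Type*} [Countable Λ] (d : ℕ) (hd : 2 ≤ d)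
    (P : Fin d → Λ → ℝ) (hPnn : ∀ k x, 0 ≤ P k x) (hPsum : ∀ k, HasSum (P k) 1)
    (R : Fin d → Λ → ℝ) (hR0 : ∀ k x, 0 ≤ R k x) (hR1 : ∀ k x, R k x ≤ 1)
    (hRsum : ∀ x, ∑ k, R k x = 1)
    (x0 : Λ) (hx0 : ∀ k, 0 < P k x0)
    (hzero : ∑ k, ∑' x, R k x * P k x = 0) :
    False := by
  have hsummable : ∀ k, Summable (fun x => R k x * P k x) := by
    intro k
    apply Summable.of_nonneg_of_le (fun x => mul_nonneg (hR0 k x) (hPnn k x))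
      (fun x => by nlinarith [hR1 k x, hPnn k x, hR0 k x])
      (hPsum k).summable
  have hterm : ∀ k, ∑' x, R k x * P k x = 0 := by
    intro k
    have := (Finset.sum_eq_zero_iff_of_nonneg
      (fun k _ => tsum_nonneg (fun x => mul_nonneg (hR0 k x) (hPnn k x)))).mp hzero
    exact this k (Finset.mem_univ k)
  have hR0x0 : ∀ k, R k x0 = 0 := by
    intro k
    have hle : R k x0 * P k x0 ≤ ∑' x, R k x * P k x :=
      Summable.le_tsum (hsummable k) x0 (fun x _ => mul_nonneg (hR0 k x) (hPnn k x))
    rw [hterm k] at hle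
    have := hx0 k
    nlinarith [hR0 k x0]
  have : (1:ℝ) = 0 := by
    rw [← hRsum x0]
    exact Finset.sum_eq_zero (fun k _ => hR0x0 k)
  norm_num at this
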